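/- Let ι be a finite type of players with decidable equality, and let V : Finset ι → ℝ be monotone (S' ⊆ S implies V(S') ≤ V(S)). For a finset S and k ∈ S, define φ_k(S) = max_{T ⊆ S, k ∈ T} min( V(T) − V({k}), V(T) − V(T \ {k}) ). Then for every finset S with |S| ≥ 2 and every i ∈ S, the general mechanism is truthful for all-or-nothing players: φ_i(S) − max_{j ∈ S, j ≠ i} φ_j(S) ≥ − max_{j ∈ S, j ≠ i} φ_j(S \ {i}); that is, player i's single-envy utility when participating is at least its utility when withdrawing. -/
import Mathlib


/-- The rewardable contribution of player `i` in the coalition `S`: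
`φ_i(S) = max_{T ⊆ S, i ∈ T} min( V(T) − V({i}), V(T) − V(T \ {i}) )`.
(When `i ∈ S`, `insert i S = S`, so the maximization ranges exactly over the
subsets `T ⊆ S` containing `i`.) -/
noncomputable def phi {ι : Type*} [DecidableEq ι] (V : Finset ι → ℝ)
    (S : Finset ι) (i : ι) : ℝ :=
  ((insert i S).powerset.filter (fun T => i ∈ T)).sup'
    ⟨{i}, by simp⟩
    (fun T => min (V T - V {i}) (V T - V (T.erase i)))

lemma le_phi {ι : Type*} [DecidableEq ι] (V : Finset ι → ℝ)
    (S : Finset ι) (i : ι) (T : Finset ι) (hT : T ⊆ insert i S) (hiT : i ∈ T) :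
    min (V T - V {i}) (V T - V (T.erase i)) ≤ phi V S i :=
  Finset.le_sup' (f := fun T => min (V T - V {i}) (V T - V (T.erase i)))
    (by simp [Finset.mem_filter, Finset.mem_powerset, hT, hiT])

lemma phi_nonneg {ι : Type*} [DecidableEq ι] (V : Finset ι → ℝ)
    (hV : ∀ S' S : Finset ι, S' ⊆ S → V S' ≤ V S)
    (S : Finset ι) (i : ι) : 0 ≤ phi V S i := by
  have h := le_phi V S i {i} (by simp) (by simp)
  have h0 : 0 ≤ V ({i} : Finset ι) - V (({i} : Finset ι).erase i) := by
    have := hV (({i} : Finset ι).erase i) {i} (Finset.erase_subset _ _)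
    linarith
  have : (0:ℝ) ≤ min (V {i} - V {i}) (V ({i} : Finset ι) - V (({i} : Finset ι).erase i)) :=
    le_min (by simp) h0
  linarith

lemma phi_key {ι : Type*} [DecidableEq ι] (V : Finset ι → ℝ)
    (hV : ∀ S' S : Finset ι, S' ⊆ S → V S' ≤ V S)
    (S : Finset ι) (i j : ι) (hi : i ∈ S) (hj : j ∈ S) (hij : j ≠ i) :
    phi V S j ≤ phi V S i + phi V (S.erase i) j := by
  apply Finset.sup'_le
  intro T hT
  simp only [Finset.mem_filter, Finset.mem_powerset] at hT
  obtain ⟨hTS, hjT⟩ := hT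
  rw [Finset.insert_eq_self.mpr hj] at hTS
  by_cases hiT : i ∈ T
  · -- case i ∈ T
    set T' := T.erase i with hT'
    have hT'sub : T' ⊆ insert j (S.erase i) := by
      intro x hx
      rw [Finset.mem_erase] at hx
      exact Finset.mem_insert_of_mem (Finset.mem_erase.mpr ⟨hx.1, hTS hx.2⟩)
    have hjT' : j ∈ T' := Finset.mem_erase.mpr ⟨hij, hjT⟩
    have hphij : min (V T' - V {j}) (V T' - V (T'.erase j)) ≤ phi V (S.erase i) j :=
      le_phi V (S.erase i) j T' hT'sub hjT'
    have hphii : min (V T - V {i}) (V T - V T') ≤ phi V S i :=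
      le_phi V S i T (hTS.trans (Finset.subset_insert i S)) hiT
    rcases le_total (V T') (V {i}) with hc | hc
    · -- min for i is V T - V {i}
      have h1 : V T - V {i} ≤ phi V S i := by
        have : min (V T - V {i}) (V T - V T') = V T - V {i} := min_eq_left (by linarith)
        linarith [hphii, this ▸ hphii]
      have h2 : V {i} ≤ V (T.erase j) := by
        apply hV
        intro x hx
        rw [Finset.mem_singleton] at hx
        subst hx
        exact Finset.mem_erase.mpr ⟨fun h => hij h.symm, hiT⟩
      have h3 : min (V T - V {j}) (V T - V (T.erase j)) ≤ V T - V (T.erase j) :=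
        min_le_right _ _
      have h4 : 0 ≤ phi V (S.erase i) j := phi_nonneg V hV _ _
      linarith
    · -- min for i is V T - V T'
      have h1 : V T - V T' ≤ phi V S i := by
        have heq : min (V T - V {i}) (V T - V T') = V T - V T' := min_eq_right (by linarith)
        linarith [heq ▸ hphii]
      have h2 : V (T'.erase j) ≤ V (T.erase j) := by
        apply hV
        intro x hx
        rw [Finset.mem_erase] at hx ⊢
        exact ⟨hx.1, (Finset.erase_subset _ _) hx.2⟩
      rcases le_total (V T' - V {j}) (V T' - V (T'.erase j)) with hm | hm
      · have heq : min (V T' - V {j}) (V T' - V (T'.erase j)) = V T' - V {j} :=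
            min_eq_left hm
        rw [heq] at hphij
        have : min (V T - V {j}) (V T - V (T.erase j)) ≤ V T - V {j} := min_le_left _ _
        linarith
      · have heq : min (V T' - V {j}) (V T' - V (T'.erase j)) = V T' - V (T'.erase j) :=
            min_eq_right hm
        rw [heq] at hphij
        have : min (V T - V {j}) (V T - V (T.erase j)) ≤ V T - V (T.erase j) :=
            min_le_right _ _
        linarith
  · -- case i ∉ T : T ⊆ S.erase i
    have hTsub : T ⊆ insert j (S.erase i) := by
      intro x hx
      exact Finset.mem_insert_of_mem (Finset.mem_erase.mpr ⟨fun h => hiT (h ▸ hx), hTS hx⟩)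
    have hphij : min (V T - V {j}) (V T - V (T.erase j)) ≤ phi V (S.erase i) j :=
      le_phi V (S.erase i) j T hTsub hjT
    have h4 : 0 ≤ phi V S i := phi_nonneg V hV _ _
    linarith

/-- Truthfulness of the general mechanism for all-or-nothing players: player `i`'s
single-envy utility when participating, `φ_i(S) − max_{j ∈ S, j ≠ i} φ_j(S)`, is at
least its utility upon withdrawing, `− max_{j ∈ S, j ≠ i} φ_j(S \ {i})`. -/
theorem general_mechanism_truthful {ι : Type*} [Fintype ι] [DecidableEq ι]
    (V : Finset ι → ℝ) (hV : ∀ S' S : Finset ι, S' ⊆ S → V S' ≤ V S)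
    (S : Finset ι) (hS : 2 ≤ S.card) (i : ι) (hi : i ∈ S) :
    phi V S i -
        (S.erase i).sup'
          (by rw [← Finset.card_pos, Finset.card_erase_of_mem hi]; omega)
          (fun j => phi V S j)
      ≥ -
        (S.erase i).sup'
          (by rw [← Finset.card_pos, Finset.card_erase_of_mem hi]; omega)
          (fun j => phi V (S.erase i) j) := by
  have hne : (S.erase i).Nonempty := by
    rw [← Finset.card_pos, Finset.card_erase_of_mem hi]; omega
  have hsup : (S.erase i).sup' hne (fun j => phi V S j)
      ≤ phi V S i + (S.erase i).sup' hne (fun j => phi V (S.erase i) j) := by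
    apply Finset.sup'_le
    intro j hjmem
    rw [Finset.mem_erase] at hjmem
    have hkey := phi_key V hV S i j hi hjmem.2 hjmem.1
    have hle : phi V (S.erase i) j ≤ (S.erase i).sup' hne (fun j => phi V (S.erase i) j) :=
      Finset.le_sup' _ (Finset.mem_erase.mpr hjmem)
    linarith
  linarith
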